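/- Let B₁ and B₂ be Boolean algebras and h : B₁ → B₂ a Boolean homomorphism. If h is surjective, then its canonical extension h^σ : 𝒫(Uf(B₁)) → 𝒫(Uf(B₂)) is surjective. -/

import Mathlib

/-! The canonical extension of a Boolean homomorphism `h` is the inverse image map of its dual
`Uf B₂ → Uf B₁`, `v ↦ h⁻¹(v)`: an ultrafilter `w` lies in `h^σ(A)` iff some filter `F` with
`⋂_{a ∈ F} φ₁(a) ⊆ A` is contained in `h⁻¹(w)`, and since `⋂_{a ∈ u} φ₁(a) = {u}` for an
ultrafilter `u`, this just says `h⁻¹(w) ∈ A`. If `h` is surjective, the dual map is injective,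
so its inverse image map is surjective. -/

/-- A (lattice) filter of a Boolean algebra: a nonempty, upward-closed subset
closed under binary meets. -/
def IsLatFilter {B : Type*} [BooleanAlgebra B] (F : Set B) : Prop :=
  F.Nonempty ∧ (∀ a b : B, a ∈ F → a ≤ b → b ∈ F) ∧ (∀ a b : B, a ∈ F → b ∈ F → a ⊓ b ∈ F)

/-- A (lattice) ideal of a Boolean algebra: a nonempty, downward-closed subset
closed under binary joins. -/
def IsLatIdeal {B : Type*} [BooleanAlgebra B] (I : Set B) : Prop :=
  I.Nonempty ∧ (∀ a b : B, a ∈ I → b ≤ a → b ∈ I) ∧ (∀ a b : B, a ∈ I → b ∈ I → a ⊔ b ∈ I)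

/-- An ultrafilter of a Boolean algebra: a maximal proper filter. -/
def IsUf {B : Type*} [BooleanAlgebra B] (F : Set B) : Prop :=
  IsLatFilter F ∧ F ≠ Set.univ ∧
    ∀ G : Set B, IsLatFilter G → G ≠ Set.univ → F ⊆ G → F = G

/-- `Uf B` is the set (type) of ultrafilters of the Boolean algebra `B`. -/
def Uf (B : Type*) [BooleanAlgebra B] : Type _ := {F : Set B // IsUf F}

/-- The Stone map `φ_B : B → 𝒫(Uf B)`, `φ_B a = {u ∈ Uf B : a ∈ u}`. -/
def stoneMap (B : Type*) [BooleanAlgebra B] : B → Set (Uf B) := fun a => {u : Uf B | a ∈ u.1}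

/-- The canonical extension of a map `h : B₁ → B₂`:
`h^σ(A) = ⋃ { ⋂_{a ∈ F} φ₂(h a) : F a filter of B₁ with ⋂_{a ∈ F} φ₁ a ⊆ A }`. -/
def canExt {B₁ B₂ : Type*} [BooleanAlgebra B₁] [BooleanAlgebra B₂] (h : B₁ → B₂)
    (A : Set (Uf B₁)) : Set (Uf B₂) :=
  ⋃ F ∈ {F : Set B₁ | IsLatFilter F ∧ (⋂ a ∈ F, stoneMap B₁ a) ⊆ A},
    ⋂ a ∈ F, stoneMap B₂ (h a)

section Ultrafilters

variable {B : Type*} [BooleanAlgebra B] {F : Set B}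

lemma IsLatFilter.top_mem (hF : IsLatFilter F) : ⊤ ∈ F := by
  obtain ⟨⟨a, ha⟩, hup, -⟩ := hF
  exact hup a ⊤ ha le_top

lemma IsLatFilter.eq_univ_of_bot_mem (hF : IsLatFilter F) (hbot : ⊥ ∈ F) : F = Set.univ :=
  Set.eq_univ_of_forall fun x => hF.2.1 ⊥ x hbot bot_le

lemma IsUf.bot_notMem (hF : IsUf F) : ⊥ ∉ F :=
  fun hbot => hF.2.1 (hF.1.eq_univ_of_bot_mem hbot)

lemma IsUf.eq_of_subset {G : Set B} (hF : IsUf F) (hG : IsUf G) (hFG : F ⊆ G) : F = G :=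
  hF.2.2 G hG.1 hG.2.1 hFG

lemma IsUf.compl_mem_of_notMem (hF : IsUf F) {a : B} (ha : a ∉ F) : aᶜ ∈ F := by
  by_contra hc
  -- Otherwise the filter generated by `F ∪ {a}` is proper and strictly larger than `F`.
  let G : Set B := {x | ∃ f ∈ F, f ⊓ a ≤ x}
  have hG : IsLatFilter G := by
    refine ⟨⟨⊤, ⊤, hF.1.top_mem, le_top⟩, ?_, ?_⟩
    · rintro x y ⟨f, hf, hfx⟩ hxy
      exact ⟨f, hf, hfx.trans hxy⟩
    · rintro x y ⟨f, hf, hfx⟩ ⟨g, hg, hgy⟩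
      refine ⟨f ⊓ g, hF.1.2.2 f g hf hg, ?_⟩
      calc f ⊓ g ⊓ a = (f ⊓ a) ⊓ (g ⊓ a) := by rw [inf_inf_distrib_right]
        _ ≤ x ⊓ y := inf_le_inf hfx hgy
  have hG_proper : G ≠ Set.univ := by
    intro hG_univ
    obtain ⟨f, hf, hfa⟩ : ⊥ ∈ G := hG_univ ▸ Set.mem_univ _
    exact hc (hF.1.2.1 f aᶜ hf (le_compl_iff_disjoint_right.2 (disjoint_iff_inf_le.2 hfa)))
  have hFG : F = G := hF.2.2 G hG hG_proper fun f hf => ⟨f, hf, inf_le_left⟩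
  exact ha (hFG ▸ ⟨⊤, hF.1.top_mem, inf_le_right⟩)

lemma isUf_of_mem_or_compl_mem (hF : IsLatFilter F) (hbot : ⊥ ∉ F)
    (hmem : ∀ a, a ∈ F ∨ aᶜ ∈ F) : IsUf F := by
  refine ⟨hF, fun hF_univ => hbot (hF_univ ▸ Set.mem_univ _), fun G hG hG_proper hFG => ?_⟩
  refine hFG.antisymm fun b hb => (hmem b).resolve_right fun hbc => hG_proper ?_
  exact hG.eq_univ_of_bot_mem (by simpa using hG.2.2 b bᶜ hb (hFG hbc))

lemma mem_iInter_stoneMap {u : Uf B} : u ∈ ⋂ a ∈ F, stoneMap B a ↔ F ⊆ u.1 := by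
  simp only [Set.mem_iInter, stoneMap, Set.mem_ofPred_eq, Set.subset_def]

lemma iInter_stoneMap_eq_singleton (u : Uf B) : ⋂ a ∈ u.1, stoneMap B a = {u} :=
  Set.eq_singleton_iff_unique_mem.2
    ⟨mem_iInter_stoneMap.2 subset_rfl,
      fun w hw => (Subtype.ext (u.2.eq_of_subset w.2 (mem_iInter_stoneMap.1 hw))).symm⟩

end Ultrafilters

section Comap

variable {B₁ B₂ : Type*} [BooleanAlgebra B₁] [BooleanAlgebra B₂]

lemma IsUf.preimage (h : BoundedLatticeHom B₁ B₂) {v : Set B₂} (hv : IsUf v) :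
    IsUf (h ⁻¹' v) := by
  refine isUf_of_mem_or_compl_mem ⟨⟨⊤, ?_⟩, ?_, ?_⟩ ?_ fun a => ?_
  · simpa only [Set.mem_preimage, map_top] using hv.1.top_mem
  · exact fun a b ha hab => hv.1.2.1 _ _ ha (OrderHomClass.mono h hab)
  · intro a b ha hb
    simpa only [Set.mem_preimage, map_inf] using hv.1.2.2 _ _ ha hb
  · simpa only [Set.mem_preimage, map_bot] using hv.bot_notMem
  · simp only [Set.mem_preimage, map_compl']
    exact (em _).imp_right hv.compl_mem_of_notMem

def Uf.comap (h : BoundedLatticeHom B₁ B₂) (v : Uf B₂) : Uf B₁ :=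
  ⟨h ⁻¹' v.1, v.2.preimage h⟩

lemma Uf.comap_injective {h : BoundedLatticeHom B₁ B₂} (hsurj : Function.Surjective h) :
    Function.Injective (Uf.comap h) :=
  fun _ _ hvw => Subtype.ext (hsurj.preimage_injective (congrArg Subtype.val hvw))

lemma canExt_eq_preimage_comap (h : BoundedLatticeHom B₁ B₂) (A : Set (Uf B₁)) :
    canExt h A = Uf.comap h ⁻¹' A := by
  ext w
  have mem_iInter_iff (F : Set B₁) : w ∈ ⋂ a ∈ F, stoneMap B₂ (h a) ↔ F ⊆ (Uf.comap h w).1 := by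
    simp only [Set.mem_iInter, stoneMap, Set.mem_ofPred_eq, Set.subset_def]
    rfl
  simp only [canExt, Set.mem_iUnion, Set.mem_ofPred_eq, exists_prop, mem_iInter_iff]
  constructor
  · rintro ⟨F, ⟨-, hFA⟩, hFw⟩
    exact hFA (mem_iInter_stoneMap.2 hFw)
  · intro hw
    refine ⟨(Uf.comap h w).1, ⟨(Uf.comap h w).2.1, ?_⟩, subset_rfl⟩
    rw [iInter_stoneMap_eq_singleton]
    exact Set.singleton_subset_iff.2 hw

end Comap

/-- If a Boolean homomorphism `h : B₁ → B₂` is surjective, then its canonical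
extension `h^σ : 𝒫(Uf B₁) → 𝒫(Uf B₂)` is surjective. -/
theorem canExt_surjective {B₁ B₂ : Type*} [BooleanAlgebra B₁] [BooleanAlgebra B₂]
    (h : BoundedLatticeHom B₁ B₂) (hsurj : Function.Surjective h) :
    Function.Surjective (canExt (⇑h)) := by
  rw [funext (canExt_eq_preimage_comap h)]
  exact (Uf.comap_injective hsurj).preimage_surjective
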